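/- Let (G,X) be a G-system, x ∈ X, and F = (F_n)_{n∈D} a Følner net in G. If C_F(x) is S-generic (there existsز z ∈ C_F(x) with C_F(z) = C_F(x)) and C_F(x) is not a minimal subset of (G,X), then the subsystem (G, C_F(x)) is point transitive (some point of C_F(x) has orbit dense in C_F(x)), and there exists ε > 0 such that for every z ∈ C_F(x) the set U_ε(z) = {y ∈ C_F(x) : there is a sequence (g_n) in G with liminf_n d(g_n z, g_n y) ≥ ε} is dense in C_F(x). -/

import Mathlib

open Filter Metric Set

section Defs

variable {G : Type*} [Group G] [DecidableEq G]
variable {D : Type*} [Preorder D]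

/-- `F` is a (left) Følner net in `G`. -/
def IsFolnerNet (F : D → Finset G) : Prop :=
  (∀ n, (F n).Nonempty) ∧
    ∀ g : G,
      Tendsto (fun n : D =>
          ((symmDiff ((F n).image fun h => g * h) (F n)).card : ℝ) / (F n).card)
        atTop (nhds 0)

/-- Upper density of `A ⊆ G` relative to the net `F`. -/
noncomputable def upperDensity (F : D → Finset G) (A : Set G) : ℝ :=
  sSup {α : ℝ | ∀ m : D, ∃ n : D, m ≤ n ∧
    α ≤ (((F n : Set G) ∩ A).ncard : ℝ) / (F n).card}

variable {X : Type*} [MetricSpace X] [MulAction G X]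

/-- The minimal `F`-center of attraction of `x`. -/
def minCenter (F : D → Finset G) (x : X) : Set X :=
  {y : X | ∀ U : Set X, IsOpen U → y ∈ U → 0 < upperDensity F {g : G | g • x ∈ U}}

end Defs

/-- `Λ` is a minimal subset of the `G`-system: nonempty, closed, `G`-invariant, and containing
no nonempty proper closed `G`-invariant subset. -/
def IsMinimalSubset (G : Type*) [Group G] {X : Type*} [MetricSpace X] [MulAction G X]
    (Λ : Set X) : Prop :=
  Λ.Nonempty ∧ IsClosed Λ ∧ (∀ g : G, ∀ z ∈ Λ, g • z ∈ Λ) ∧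
    ∀ Λ' ⊆ Λ, Λ'.Nonempty → IsClosed Λ' → (∀ g : G, ∀ z ∈ Λ', g • z ∈ Λ') → Λ' = Λ

/-! Since `C_F(z) = C_F(x) =: C`, every point of `C` is visited by the orbit of `z` with positive
upper density, so `z` has dense orbit in `C`. For sensitivity, pick `c ∈ C` off a proper closed
invariant `M ⊂ C` and `ε = d(c, M) / 5`. If `U_ε(z')` missed an open `V` meeting `C`, all points of
`V ∩ C` would stay `2ε`-close along every orbit. The return set `A` of `z` to `V` has positive
density, so by the Følner property `A * A⁻¹` is syndetic; this forces the whole orbit of a point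
of `V ∩ C` to stay `4ε`-close to `M`, and hence also `c`, which lies in its orbit closure. -/

open Pointwise

lemma sum_ncard_coe_inter_le_card {α ι : Type*} (s : Finset α) (K : Finset ι) {t : ι → Set α}
    (ht : (K : Set ι).PairwiseDisjoint t) : ∑ k ∈ K, ((s : Set α) ∩ t k).ncard ≤ s.card := by
  classical
  have hfilter : ∀ k, ((s : Set α) ∩ t k).ncard = (s.filter (· ∈ t k)).card := fun k => by
    rw [← Set.ncard_coe_finset, Finset.coe_filter]
    rfl
  simp only [hfilter]
  rw [← Finset.card_biUnion]
  · exact Finset.card_le_card (Finset.biUnion_subset.2 fun k _ => Finset.filter_subset _ _)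
  · exact fun k hk l hl hkl => Finset.disjoint_filter_filter' _ _ (ht hk hl hkl)

lemma ncard_coe_inter_div_card_le_one {α : Type*} (s : Finset α) (A : Set α) :
    (((s : Set α) ∩ A).ncard : ℝ) / s.card ≤ 1 := by
  refine div_le_one_of_le₀ ?_ (Nat.cast_nonneg _)
  exact_mod_cast (Set.ncard_le_ncard Set.inter_subset_left s.finite_toSet).trans_eq
    (Set.ncard_coe_finset s)

section UpperDensity

variable {G : Type*} {D : Type*} [Preorder D] [IsDirectedOrder D] [Nonempty D]
  {F : D → Finset G} {A : Set G}

lemma exists_pos_frequently_le_of_upperDensity_pos (h : 0 < upperDensity F A) :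
    ∃ α > 0, ∃ᶠ n in atTop, α ≤ (((F n : Set G) ∩ A).ncard : ℝ) / (F n).card := by
  obtain ⟨α, hα, hpos⟩ := exists_lt_of_lt_csSup ⟨0, fun m => ⟨m, le_rfl, by positivity⟩⟩ h
  exact ⟨α, hpos, frequently_atTop.2 hα⟩

lemma upperDensity_pos_of_frequently {α : ℝ} (hα : 0 < α)
    (h : ∃ᶠ n in atTop, α ≤ (((F n : Set G) ∩ A).ncard : ℝ) / (F n).card) :
    0 < upperDensity F A := by
  have hbdd : BddAbove {α : ℝ | ∀ m : D, ∃ n : D, m ≤ n ∧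
      α ≤ (((F n : Set G) ∩ A).ncard : ℝ) / (F n).card} := by
    refine ⟨1, fun β hβ => ?_⟩
    obtain ⟨n, -, hn⟩ := hβ (Classical.arbitrary D)
    exact hn.trans (ncard_coe_inter_div_card_le_one _ _)
  exact hα.trans_le (le_csSup hbdd (frequently_atTop.1 h))

lemma nonempty_of_upperDensity_pos (h : 0 < upperDensity F A) : A.Nonempty := by
  obtain ⟨α, hα, hfreq⟩ := exists_pos_frequently_le_of_upperDensity_pos h
  obtain ⟨n, hn⟩ := hfreq.exists
  have hne : ((F n : Set G) ∩ A).ncard ≠ 0 := fun h0 => by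
    rw [h0, Nat.cast_zero, zero_div] at hn
    exact hα.not_ge hn
  obtain ⟨a, -, ha⟩ := Set.nonempty_of_ncard_ne_zero hne
  exact ⟨a, ha⟩

end UpperDensity

section Folner

variable {G : Type*} [Group G] [DecidableEq G] {D : Type*} [Preorder D] {F : D → Finset G}
  {A : Set G}

lemma ncard_inter_le_ncard_inter_smul_add (s : Finset G) (A : Set G) (k : G) :
    ((s : Set G) ∩ A).ncard ≤
      ((s : Set G) ∩ k • A).ncard + (symmDiff (s.image (k⁻¹ * ·)) s).card := by
  have hsub : (s : Set G) ∩ A ⊆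
      k⁻¹ • ((s : Set G) ∩ k • A) ∪ (symmDiff (s.image (k⁻¹ * ·)) s : Finset G) := by
    rintro a ⟨has, haA⟩
    by_cases hk : a ∈ s.image (k⁻¹ * ·)
    · obtain ⟨b, hbs, rfl⟩ := Finset.mem_image.1 hk
      exact Or.inl ⟨b, ⟨hbs, k⁻¹ * b, haA, by simp⟩, rfl⟩
    · exact Or.inr (Finset.mem_symmDiff.2 (Or.inr ⟨has, hk⟩))
  calc ((s : Set G) ∩ A).ncard
      ≤ (k⁻¹ • ((s : Set G) ∩ k • A) ∪ (symmDiff (s.image (k⁻¹ * ·)) s : Finset G)).ncard :=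
        Set.ncard_le_ncard hsub
          (((s.finite_toSet.inter_of_left _).smul_set).union (Finset.finite_toSet _))
    _ ≤ _ := by
        grw [Set.ncard_union_le, Set.ncard_smul_set, Set.ncard_coe_finset]

lemma IsFolnerNet.eventually_ncard_inter_div_le (hF : IsFolnerNet F) (A : Set G) (k : G)
    {δ : ℝ} (hδ : 0 < δ) :
    ∀ᶠ n in atTop, (((F n : Set G) ∩ A).ncard : ℝ) / (F n).card ≤
      (((F n : Set G) ∩ k • A).ncard : ℝ) / (F n).card + δ := by
  filter_upwards [(hF.2 k⁻¹).eventually_lt_const hδ] with n hn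
  calc (((F n : Set G) ∩ A).ncard : ℝ) / (F n).card
      ≤ ((((F n : Set G) ∩ k • A).ncard + (symmDiff ((F n).image (k⁻¹ * ·)) (F n)).card : ℕ)
          : ℝ) / (F n).card := by
        gcongr
        exact ncard_inter_le_ncard_inter_smul_add _ _ _
    _ ≤ _ := by
        rw [Nat.cast_add, add_div]
        linarith

variable [IsDirectedOrder D] [Nonempty D]

lemma upperDensity_smul_pos (hF : IsFolnerNet F) (h : 0 < upperDensity F A) (k : G) :
    0 < upperDensity F (k • A) := by
  obtain ⟨α, hα, hfreq⟩ := exists_pos_frequently_le_of_upperDensity_pos h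
  refine upperDensity_pos_of_frequently (half_pos hα) ?_
  refine (hfreq.and_eventually (hF.eventually_ncard_inter_div_le A k (half_pos hα))).mono ?_
  rintro n ⟨hA, hkA⟩
  linarith

lemma exists_bound_card_of_pairwiseDisjoint_smul (hF : IsFolnerNet F)
    (h : 0 < upperDensity F A) :
    ∃ N : ℕ, ∀ K : Finset G, (K : Set G).PairwiseDisjoint (· • A) → K.card ≤ N := by
  obtain ⟨α, hα, hfreq⟩ := exists_pos_frequently_le_of_upperDensity_pos h
  refine ⟨⌈2 / α⌉₊, fun K hK => ?_⟩
  have hev : ∀ᶠ n in atTop, ∀ k ∈ K, (((F n : Set G) ∩ A).ncard : ℝ) / (F n).card ≤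
      (((F n : Set G) ∩ k • A).ncard : ℝ) / (F n).card + α / 2 :=
    (eventually_all_finset K).2 fun k _ => hF.eventually_ncard_inter_div_le A k (half_pos hα)
  obtain ⟨n, hαn, hn⟩ := (hfreq.and_eventually hev).exists
  have hsum : ∑ k ∈ K, (((F n : Set G) ∩ k • A).ncard : ℝ) / (F n).card ≤ 1 := by
    rw [← Finset.sum_div, ← Nat.cast_sum]
    refine div_le_one_of_le₀ ?_ (Nat.cast_nonneg _)
    exact_mod_cast sum_ncard_coe_inter_le_card (F n) K hK
  have hcard : (K.card : ℝ) * (α / 2) ≤ 1 := by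
    calc (K.card : ℝ) * (α / 2) = ∑ _k ∈ K, α / 2 := by rw [Finset.sum_const, nsmul_eq_mul]
      _ ≤ ∑ k ∈ K, (((F n : Set G) ∩ k • A).ncard : ℝ) / (F n).card :=
          Finset.sum_le_sum fun k hk => by linarith [hn k hk]
      _ ≤ 1 := hsum
  have : (K.card : ℝ) ≤ 2 / α := by
    rw [le_div_iff₀ hα]
    linarith
  exact_mod_cast this.trans (Nat.le_ceil _)

/-- `A * A⁻¹` is syndetic. A maximal `K` with pairwise disjoint translates `k • A` works: such `K`
are finite of bounded size, since each translate has about the density of `A`. -/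
lemma exists_finset_forall_smul_inter_smul_nonempty (hF : IsFolnerNet F)
    (h : 0 < upperDensity F A) :
    ∃ K : Finset G, ∀ g : G, ∃ k ∈ K, (g • A ∩ k • A).Nonempty := by
  set P : Finset G → Prop := fun K => (K : Set G).PairwiseDisjoint (· • A)
  obtain ⟨N, hN⟩ := exists_bound_card_of_pairwiseDisjoint_smul hF h
  obtain ⟨K, hK, hmax⟩ : ∃ K, P K ∧ ∀ K', P K' → K'.card ≤ K.card := by
    let S := {c | ∃ K, P K ∧ K.card = c}
    have hbdd : BddAbove S := ⟨N, by rintro _ ⟨K, hK, rfl⟩; exact hN K hK⟩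
    have hS : S.Nonempty := ⟨0, ∅, by simp [P], rfl⟩
    obtain ⟨K, hK, hKc⟩ := Nat.sSup_mem hS hbdd
    exact ⟨K, hK, fun K' hK' => hKc ▸ le_csSup hbdd ⟨K', hK', rfl⟩⟩
  refine ⟨K, fun g => ?_⟩
  by_contra! hg
  have hdisj : ∀ k ∈ K, Disjoint (g • A) (k • A) := fun k hk =>
    Set.disjoint_iff_inter_eq_empty.2 (hg k hk)
  have hgK : g ∉ K := fun hgK =>
    (nonempty_of_upperDensity_pos h).smul_set.ne_empty (disjoint_self.1 (hdisj g hgK))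
  have := hmax (insert g K) (by
    simp only [P, Finset.coe_insert]
    exact hK.insert fun k hk _ => hdisj k hk)
  rw [Finset.card_insert_of_notMem hgK] at this
  omega

end Folner

section CenterOfAttraction

variable {G : Type*} [Group G] {D : Type*} [Preorder D] {X : Type*} [MetricSpace X]
  [MulAction G X]

lemma isClosed_minCenter (F : D → Finset G) (x : X) : IsClosed (minCenter F x) := by
  refine isOpen_compl_iff.1 (isOpen_iff_mem_nhds.2 fun y hy => ?_)
  obtain ⟨U, hU, hyU, hpos⟩ :
      ∃ U, IsOpen U ∧ y ∈ U ∧ ¬ 0 < upperDensity F {g : G | g • x ∈ U} := by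
    simpa [minCenter] using hy
  exact mem_of_superset (hU.mem_nhds hyU) fun y' hy' hy'C => hpos (hy'C U hU hy')

variable [IsDirectedOrder D] [Nonempty D]

lemma smul_mem_minCenter [DecidableEq G] {F : D → Finset G} {g : G}
    (hg : Continuous fun y : X => g • y) (hF : IsFolnerNet F) {x y : X}
    (hy : y ∈ minCenter F x) : g • y ∈ minCenter F x := by
  intro U hU hgyU
  have hshift : {h : G | h • x ∈ U} = g • {h : G | h • x ∈ (g • ·) ⁻¹' U} := by
    ext h
    simp [Set.mem_smul_set_iff_inv_smul_mem, mul_smul]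
  rw [hshift]
  exact upperDensity_smul_pos hF (hy _ (hU.preimage hg) hgyU) g

lemma minCenter_subset_closure_orbit (F : D → Finset G) (x : X) :
    minCenter F x ⊆ closure (MulAction.orbit G x) := fun _ hy =>
  mem_closure_iff.2 fun U hU hyU =>
    let ⟨g, hg⟩ := nonempty_of_upperDensity_pos (hy U hU hyU)
    ⟨g • x, hg, g, rfl⟩

end CenterOfAttraction

section Sensitivity

variable {G : Type*} [Group G] {X : Type*} [MetricSpace X] [MulAction G X]

lemma infDist_smul_le_of_forall_exists_finset (hcont : ∀ g : G, Continuous fun y : X => g • y)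
    {K : Finset G} {y₀ : X} {r : ℝ}
    (hK : ∀ g : G, ∃ k ∈ K, ∀ h : G, dist ((h * k⁻¹ * g) • y₀) (h • y₀) ≤ r)
    {M : Set X} (hM : ∀ g : G, ∀ m ∈ M, g • m ∈ M) {m : X} (hm : m ∈ M)
    (hmy : m ∈ closure (MulAction.orbit G y₀)) (h : G) : infDist (h • y₀) M ≤ r := by
  by_contra! hlt
  set W := ⋂ k ∈ K, {w : X | r < dist ((h * k⁻¹) • w) (h • y₀)}
  have hW : IsOpen W :=
    isOpen_biInter_finset fun k _ => isOpen_lt continuous_const ((hcont _).dist continuous_const)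
  have hmW : m ∈ W := mem_iInter₂.2 fun k _ =>
    hlt.trans_le ((infDist_le_dist_of_mem (hM _ _ hm)).trans_eq (dist_comm _ _))
  obtain ⟨_, hgW, g, rfl⟩ := mem_closure_iff.1 hmy W hW hmW
  obtain ⟨k, hk, hkr⟩ := hK g
  have : r < dist ((h * k⁻¹) • g • y₀) (h • y₀) := mem_iInter₂.1 hgW k hk
  rw [← mul_smul] at this
  exact (hkr h).not_gt this

variable [DecidableEq G] {D : Type*} [Preorder D] [IsDirectedOrder D] [Nonempty D]
  {F : D → Finset G}

lemma infDist_le_of_mem_closure_orbit (hcont : ∀ g : G, Continuous fun y : X => g • y)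
    (hF : IsFolnerNet F) {S : Set X} {r : ℝ}
    (hS : ∀ y₁ ∈ S, ∀ y₂ ∈ S, ∀ g : G, dist (g • y₁) (g • y₂) ≤ r) {z : X}
    (hz : 0 < upperDensity F {g : G | g • z ∈ S}) {M : Set X}
    (hM : ∀ g : G, ∀ m ∈ M, g • m ∈ M) {m : X} (hm : m ∈ M)
    (hmz : m ∈ closure (MulAction.orbit G z)) {y : X} (hy : y ∈ closure (MulAction.orbit G z)) :
    infDist y M ≤ 2 * r := by
  obtain ⟨K, hK⟩ := exists_finset_forall_smul_inter_smul_nonempty hF hz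
  obtain ⟨a₀, ha₀⟩ := nonempty_of_upperDensity_pos hz
  -- `g a₁ = k a₂` with `a₀ z, a₁ z, a₂ z ∈ S`: `h k⁻¹ g` moves `a₀ z` to within `2r` of `h a₀ z`.
  have hret : ∀ g : G, ∃ k ∈ K, ∀ h : G,
      dist ((h * k⁻¹ * g) • (a₀ • z)) (h • (a₀ • z)) ≤ 2 * r := by
    intro g
    obtain ⟨k, hk, _, ⟨a₁, ha₁, rfl⟩, a₂, ha₂, hga⟩ := hK g
    refine ⟨k, hk, fun h => ?_⟩
    have hmove : (h * k⁻¹ * g) • (a₁ • z) = h • (a₂ • z) := by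
      simp only [smul_eq_mul] at hga
      rw [smul_smul, smul_smul, mul_assoc, ← hga]
      group
    calc dist ((h * k⁻¹ * g) • (a₀ • z)) (h • (a₀ • z))
        ≤ dist ((h * k⁻¹ * g) • (a₀ • z)) ((h * k⁻¹ * g) • (a₁ • z))
          + dist (h • (a₂ • z)) (h • (a₀ • z)) := hmove ▸ dist_triangle _ _ _
      _ ≤ r + r := add_le_add (hS _ ha₀ _ ha₁ _) (hS _ ha₂ _ ha₀ _)
      _ = 2 * r := by ring
  rw [← MulAction.orbit_smul a₀ z] at hmz hy
  have horbit : MulAction.orbit G (a₀ • z) ⊆ {y | infDist y M ≤ 2 * r} := by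
    rintro _ ⟨h, rfl⟩
    exact infDist_smul_le_of_forall_exists_finset hcont hret hM hm hmz h
  exact closure_minimal horbit (isClosed_le (continuous_infDist_pt M) continuous_const) hy

lemma subset_closure_setOf_le_liminf_dist (hcont : ∀ g : G, Continuous fun y : X => g • y)
    (hF : IsFolnerNet F) {C : Set X} {z : X} (hzC : z ∈ C) (hC : ∀ g : G, ∀ y ∈ C, g • y ∈ C)
    (hCz : C ⊆ minCenter F z) {M : Set X} (hM : ∀ g : G, ∀ m ∈ M, g • m ∈ M) {m : X}
    (hm : m ∈ M) (hmC : m ∈ C) {c : X} (hc : c ∈ C) {ε : ℝ} (hε : 4 * ε < infDist c M)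
    (z' : X) :
    C ⊆ closure {y : X | y ∈ C ∧
      ∃ g : ℕ → G, ε ≤ liminf (fun n => dist (g n • z') (g n • y)) atTop} := by
  intro w hw
  by_contra hwcl
  rw [_root_.mem_closure_iff] at hwcl
  push Not at hwcl
  obtain ⟨V, hV, hwV, hVU⟩ := hwcl
  have hclose : ∀ y ∈ V ∩ C, ∀ g : G, dist (g • z') (g • y) < ε := by
    rintro y ⟨hyV, hyC⟩ g
    by_contra! hge
    exact eq_empty_iff_forall_notMem.1 hVU y ⟨hyV, hyC, fun _ => g, by rwa [liminf_const]⟩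
  have hstable : ∀ y₁ ∈ V ∩ C, ∀ y₂ ∈ V ∩ C, ∀ g : G, dist (g • y₁) (g • y₂) ≤ 2 * ε :=
    fun y₁ h₁ y₂ h₂ g => by
      linarith [dist_triangle_left (g • y₁) (g • y₂) (g • z'), hclose y₁ h₁ g, hclose y₂ h₂ g]
  have hvisit : 0 < upperDensity F {g : G | g • z ∈ V ∩ C} := by
    rw [show {g : G | g • z ∈ V ∩ C} = {g | g • z ∈ V} from
      Set.ext fun g => and_iff_left (hC g z hzC)]
    exact hCz hw V hV hwV
  have horbit := hCz.trans (minCenter_subset_closure_orbit F z)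
  have := infDist_le_of_mem_closure_orbit hcont hF hstable hvisit hM hm (horbit hmC) (horbit hc)
  linarith

end Sensitivity

lemma exists_ssubset_of_not_isMinimalSubset {G : Type*} [Group G] {X : Type*} [MetricSpace X]
    [MulAction G X] {Λ : Set X} (hne : Λ.Nonempty) (hcl : IsClosed Λ)
    (hinv : ∀ g : G, ∀ z ∈ Λ, g • z ∈ Λ) (h : ¬ IsMinimalSubset G Λ) :
    ∃ M ⊂ Λ, M.Nonempty ∧ IsClosed M ∧ ∀ g : G, ∀ m ∈ M, g • m ∈ M := by
  by_contra hmin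
  refine h ⟨hne, hcl, hinv, fun M hMΛ hMne hMcl hMinv => ?_⟩
  by_contra hMΛ'
  exact hmin ⟨M, ssubset_of_subset_of_ne hMΛ hMΛ', hMne, hMcl, hMinv⟩

theorem auslanderYorke_of_Sgeneric_nonminimal_general
    {G : Type*} [Group G] [DecidableEq G]
    {D : Type*} [Preorder D] [IsDirected D (· ≤ ·)] [Nonempty D]
    {X : Type*} [MetricSpace X] [MulAction G X]
    (hcont : ∀ g : G, Continuous fun y : X => g • y)
    (Fol : D → Finset G) (hFol : IsFolnerNet Fol) (x : X)
    (hS : ∃ z ∈ minCenter Fol x, minCenter Fol z = minCenter Fol x)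
    (hnotmin : ¬ IsMinimalSubset G (minCenter Fol x)) :
    (∃ y ∈ minCenter Fol x, minCenter Fol x ⊆ closure (MulAction.orbit G y)) ∧
    ∃ ε : ℝ, 0 < ε ∧ ∀ z ∈ minCenter Fol x,
      minCenter Fol x ⊆
        closure {y : X | y ∈ minCenter Fol x ∧
          ∃ g : ℕ → G, ε ≤ Filter.liminf (fun n => dist ((g n) • z) ((g n) • y)) atTop} := by
  obtain ⟨z, hzC, hCz⟩ := hS
  have hC : ∀ g : G, ∀ y ∈ minCenter Fol x, g • y ∈ minCenter Fol x :=
    fun g _ => smul_mem_minCenter (hcont g) hFol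
  refine ⟨⟨z, hzC, hCz ▸ minCenter_subset_closure_orbit Fol z⟩, ?_⟩
  obtain ⟨M, hMC, ⟨m, hm⟩, hMcl, hM⟩ :=
    exists_ssubset_of_not_isMinimalSubset ⟨z, hzC⟩ (isClosed_minCenter Fol x) hC hnotmin
  obtain ⟨c, hc, hcM⟩ := exists_of_ssubset hMC
  have hd : 0 < infDist c M := (hMcl.notMem_iff_infDist_pos ⟨m, hm⟩).1 hcM
  refine ⟨infDist c M / 5, by positivity, fun z' _ => ?_⟩
  exact subset_closure_setOf_le_liminf_dist hcont hFol hzC hC hCz.ge hM hm (hMC.subset hm) hc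
    (by linarith) z'

/-- Theorem 3.7: if `C_F(x)` is S-generic and not minimal, then the subsystem on `C_F(x)` is
point transitive and sensitive: for some `ε > 0`, for every `z ∈ C_F(x)` the set
`U_ε(z)` is dense in `C_F(x)`. -/
theorem auslanderYorke_of_Sgeneric_nonminimal
    {G : Type*} [Group G] [Infinite G] [DecidableEq G]
    {D : Type*} [Preorder D] [IsDirected D (· ≤ ·)] [Nonempty D]
    {X : Type*} [MetricSpace X] [CompactSpace X] [MulAction G X]
    (hcont : ∀ g : G, Continuous fun y : X => g • y)
    (Fol : D → Finset G) (hFol : IsFolnerNet Fol) (x : X)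
    (hS : ∃ z ∈ minCenter Fol x, minCenter Fol z = minCenter Fol x)
    (hnotmin : ¬ IsMinimalSubset G (minCenter Fol x)) :
    (∃ y ∈ minCenter Fol x, minCenter Fol x ⊆ closure (MulAction.orbit G y)) ∧
    ∃ ε : ℝ, 0 < ε ∧ ∀ z ∈ minCenter Fol x,
      minCenter Fol x ⊆
        closure {y : X | y ∈ minCenter Fol x ∧
          ∃ g : ℕ → G, ε ≤ Filter.liminf (fun n => dist ((g n) • z) ((g n) • y)) atTop} :=
  auslanderYorke_of_Sgeneric_nonminimal_general hcont Fol hFol x hS hnotmin
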